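/- Derivative rule for the Clifford–Fourier transform: for a ∈ ℝⁿ and f sufficiently smooth and decaying, 𝓕^i{a·∇f}(w) = (a·w) 𝓕^i{f}(w) i, where a·∇f is the directional derivative of f in direction a and a·w is the scalar product of a and w. -/

import Mathlib

open MeasureTheory Finset Filter
noncomputable section

/-- Model of the real Clifford algebra `Cl(p,q)` (with `n = p + q`) as the space of
coordinate functions on the canonical graded basis `{e_A : A ⊆ {1,…,n}}`. -/
abbrev Cl (n : ℕ) := Finset (Fin n) → ℝ

/-- The signature signs: `ε_k = 1` for `k < p`, `ε_k = -1` otherwise. -/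
def eps (p : ℕ) {n : ℕ} (k : Fin n) : ℝ := if (k : ℕ) < p then 1 else -1

/-- The sign in `e_A e_B = clSign p A B • e_{A Δ B}`: reordering parity times signature signs. -/
def clSign (p : ℕ) {n : ℕ} (A B : Finset (Fin n)) : ℝ :=
  (-1 : ℝ) ^ ((A ×ˢ B).filter (fun ab => ab.2 < ab.1)).card * ∏ k ∈ A ∩ B, eps p k

/-- The geometric (Clifford) product on `Cl(p,q)`. -/
def clMul (p : ℕ) {n : ℕ} (x y : Cl n) : Cl n :=
  fun C => ∑ A : Finset (Fin n), ∑ B : Finset (Fin n),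
    if symmDiff A B = C then x A * y B * clSign p A B else 0

/-- The unit `1 = e_∅` of the Clifford algebra. -/
def clOne (n : ℕ) : Cl n := fun C => if C = ∅ then 1 else 0

/-- The principal reverse `α̃`. -/
def clRev (p : ℕ) {n : ℕ} (x : Cl n) : Cl n :=
  fun A => (-1 : ℝ) ^ (A.card * (A.card - 1) / 2) * (∏ k ∈ A, eps p k) * x A

/-- Squared modulus `|M|² = Σ_A M_A²` of a multivector. -/
def modSq {n : ℕ} (M : Cl n) : ℝ := ∑ A : Finset (Fin n), M A ^ 2

/-- Modulus `|M|` of a multivector. -/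
def clMod {n : ℕ} (M : Cl n) : ℝ := Real.sqrt (modSq M)

/-- `i` is a square root of `-1` in `Cl(p,q)`. -/
def isRoot (p : ℕ) {n : ℕ} (i : Cl n) : Prop := clMul p i i = - clOne n

/-- `u(x,w) = Σ_l x_l w_l`. -/
def uu {n : ℕ} (x w : Fin n → ℝ) : ℝ := ∑ l, x l * w l

/-- The kernel `e^{-i u(x,w)} = cos(u(x,w)) - sin(u(x,w)) i`. -/
def kernelMinus {n : ℕ} (i : Cl n) (x w : Fin n → ℝ) : Cl n :=
  Real.cos (uu x w) • clOne n - Real.sin (uu x w) • i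

/-- The kernel `e^{i u(x,w)} = cos(u(x,w)) + sin(u(x,w)) i`. -/
def kernelPlus {n : ℕ} (i : Cl n) (x w : Fin n → ℝ) : Cl n :=
  Real.cos (uu x w) • clOne n + Real.sin (uu x w) • i

/-- The Clifford–Fourier transform `𝓕^i{f}(w) = ∫ f(x) e^{-i u(x,w)} dⁿx`. -/
def cft (p : ℕ) {n : ℕ} (i : Cl n) (f : (Fin n → ℝ) → Cl n) (w : Fin n → ℝ) : Cl n :=
  ∫ x : Fin n → ℝ, clMul p (f x) (kernelMinus i x w)

/-! Integrating by parts along `a` moves the derivative onto the kernel, and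
`a·∇ₓ e^{-iu(x,w)} = -(a·w) e^{-iu(x,w)} i` because `i² = -1`. Associativity of the Clifford
product then pulls the constant `i` out of the integral. On basis blades associativity is the
cocycle identity for `clSign`: its reordering sign is a product of signs over pairs, hence
multiplicative under symmetric difference in each argument, and so is its signature part. -/

theorem Finset.prod_symmDiff_of_mul_self {α M : Type*} [DecidableEq α] [CommMonoid M]
    {f : α → M} (hf : ∀ a, f a * f a = 1) (s t : Finset α) :
    ∏ a ∈ symmDiff s t, f a = (∏ a ∈ s, f a) * ∏ a ∈ t, f a := by
  have hs := prod_sdiff (f := f) (inter_subset_left : s ∩ t ⊆ s)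
  have ht := prod_sdiff (f := f) (inter_subset_right : s ∩ t ⊆ t)
  have hst : (∏ a ∈ s ∩ t, f a) * ∏ a ∈ s ∩ t, f a = 1 := by
    rw [← prod_mul_distrib]; exact prod_eq_one fun a _ => hf a
  rw [sdiff_inter_self_left] at hs
  rw [sdiff_inter_self_right] at ht
  rw [← hs, ← ht, symmDiff_def, sup_eq_union, prod_union disjoint_sdiff_sdiff]
  calc (∏ a ∈ s \ t, f a) * ∏ a ∈ t \ s, f a
      = (∏ a ∈ s \ t, f a) * (∏ a ∈ t \ s, f a) *
          ((∏ a ∈ s ∩ t, f a) * ∏ a ∈ s ∩ t, f a) := by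
        rw [hst, mul_one]
    _ = _ := by ac_rfl

def inversionSign {α : Type*} [LinearOrder α] (A B : Finset α) : ℝ :=
  ∏ a ∈ A, ∏ b ∈ B, if b < a then -1 else 1

section InversionSign

variable {α : Type*} [LinearOrder α]

lemma inversionSign_mul_self (A B : Finset α) : inversionSign A B * inversionSign A B = 1 := by
  rw [inversionSign, ← prod_mul_distrib]
  refine prod_eq_one fun a _ => ?_
  rw [← prod_mul_distrib]
  exact prod_eq_one fun b _ => by split_ifs <;> norm_num

lemma inversionSign_symmDiff_left (A B C : Finset α) :
    inversionSign (symmDiff A B) C = inversionSign A C * inversionSign B C :=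
  prod_symmDiff_of_mul_self
    (fun a => by simpa [inversionSign] using inversionSign_mul_self {a} C) A B

lemma inversionSign_symmDiff_right (A B C : Finset α) :
    inversionSign A (symmDiff B C) = inversionSign A B * inversionSign A C := by
  rw [inversionSign, inversionSign, inversionSign, ← prod_mul_distrib]
  exact prod_congr rfl fun a _ =>
    prod_symmDiff_of_mul_self (by intro b; split_ifs <;> norm_num) B C

end InversionSign

variable {n : ℕ}

lemma eps_mul_self (p : ℕ) (k : Fin n) : eps p k * eps p k = 1 := by
  unfold eps; split_ifs <;> norm_num

lemma clSign_eq_inversionSign_mul (p : ℕ) (A B : Finset (Fin n)) :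
    clSign p A B = inversionSign A B * ∏ k ∈ A ∩ B, eps p k := by
  rw [clSign, inversionSign, ← prod_product' (f := fun a b => if b < a then (-1 : ℝ) else 1),
    prod_ite, prod_const, prod_const_one, mul_one]

lemma clSign_assoc (p : ℕ) (A B C : Finset (Fin n)) :
    clSign p A B * clSign p (symmDiff A B) C = clSign p B C * clSign p A (symmDiff B C) := by
  have hsets :
      symmDiff (A ∩ B) (symmDiff A B ∩ C) = symmDiff (B ∩ C) (A ∩ symmDiff B C) := by
    ext k; simp only [mem_symmDiff, mem_inter]; tauto
  have heps := congrArg (∏ k ∈ ·, eps p k) hsets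
  simp only [prod_symmDiff_of_mul_self (eps_mul_self p)] at heps
  simp only [clSign_eq_inversionSign_mul, inversionSign_symmDiff_left, inversionSign_symmDiff_right]
  linear_combination (inversionSign A B * inversionSign A C * inversionSign B C) * heps

section CliffordProduct

variable (p : ℕ)

lemma clMul_add_left (x x' y : Cl n) : clMul p (x + x') y = clMul p x y + clMul p x' y := by
  funext C
  simp only [clMul, Pi.add_apply, ← sum_add_distrib]
  refine sum_congr rfl fun A _ => sum_congr rfl fun B _ => ?_
  split_ifs <;> ring

lemma clMul_add_right (x y y' : Cl n) : clMul p x (y + y') = clMul p x y + clMul p x y' := by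
  funext C
  simp only [clMul, Pi.add_apply, ← sum_add_distrib]
  refine sum_congr rfl fun A _ => sum_congr rfl fun B _ => ?_
  split_ifs <;> ring

lemma clMul_smul_left (r : ℝ) (x y : Cl n) : clMul p (r • x) y = r • clMul p x y := by
  funext C
  simp only [clMul, Pi.smul_apply, smul_eq_mul, mul_sum]
  refine sum_congr rfl fun A _ => sum_congr rfl fun B _ => ?_
  split_ifs <;> ring

lemma clMul_smul_right (r : ℝ) (x y : Cl n) : clMul p x (r • y) = r • clMul p x y := by
  funext C
  simp only [clMul, Pi.smul_apply, smul_eq_mul, mul_sum]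
  refine sum_congr rfl fun A _ => sum_congr rfl fun B _ => ?_
  split_ifs <;> ring

def clMulCLM : Cl n →L[ℝ] Cl n →L[ℝ] Cl n :=
  LinearMap.toContinuousLinearMap <| LinearMap.toContinuousLinearMap.toLinearMap ∘ₗ
    LinearMap.mk₂ ℝ (clMul p) (clMul_add_left p) (clMul_smul_left p) (clMul_add_right p)
      (clMul_smul_right p)

@[simp] lemma clMulCLM_apply (x y : Cl n) : clMulCLM p x y = clMul p x y := rfl

lemma clMul_sum_left {ι : Type*} (s : Finset ι) (x : ι → Cl n) (y : Cl n) :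
    clMul p (∑ j ∈ s, x j) y = ∑ j ∈ s, clMul p (x j) y := by
  simp [← clMulCLM_apply, map_sum]

lemma clMul_sum_right {ι : Type*} (s : Finset ι) (x : Cl n) (y : ι → Cl n) :
    clMul p x (∑ j ∈ s, y j) = ∑ j ∈ s, clMul p x (y j) := by
  simp [← clMulCLM_apply, map_sum]

lemma clMul_single_single (A B : Finset (Fin n)) (r s : ℝ) :
    clMul p (Pi.single A r) (Pi.single B s) = Pi.single (symmDiff A B) (r * s * clSign p A B) := by
  funext C
  rw [clMul, sum_eq_single A (fun _ _ h => by simp [h]) (by simp),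
    sum_eq_single B (fun _ _ h => by simp [h]) (by simp)]
  simp [Pi.single_apply, eq_comm]

lemma clMul_assoc (x y z : Cl n) : clMul p (clMul p x y) z = clMul p x (clMul p y z) := by
  rw [← univ_sum_single x, ← univ_sum_single y, ← univ_sum_single z]
  simp only [clMul_sum_left, clMul_sum_right, clMul_single_single, symmDiff_assoc]
  refine sum_congr rfl fun C _ => sum_congr rfl fun B _ => sum_congr rfl fun A _ => ?_
  congr 1
  linear_combination x A * y B * z C * clSign_assoc p A B C

lemma clMul_one_left (x : Cl n) : clMul p (clOne n) x = x := by
  have hone : clOne n = Pi.single ∅ 1 := by funext C; simp [clOne, Pi.single_apply]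
  have hsign (B : Finset (Fin n)) : clSign p ∅ B = 1 := by simp [clSign]
  rw [hone, ← univ_sum_single x]
  simp only [clMul_sum_right, clMul_single_single, hsign, one_mul, mul_one]
  exact sum_congr rfl fun B _ => by rw [← bot_eq_empty, bot_symmDiff]

end CliffordProduct

lemma uu_add_smul (x a w : Fin n → ℝ) (t : ℝ) : uu (x + t • a) w = uu x w + t * uu a w := by
  simp only [uu, Pi.add_apply, Pi.smul_apply, smul_eq_mul, add_mul, sum_add_distrib, mul_sum,
    mul_assoc]

lemma continuous_kernelMinus (i : Cl n) (w : Fin n → ℝ) :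
    Continuous fun x => kernelMinus i x w := by
  unfold kernelMinus uu
  fun_prop

lemma norm_kernelMinus_le (i : Cl n) (x w : Fin n → ℝ) :
    ‖kernelMinus i x w‖ ≤ ‖clOne n‖ + ‖i‖ := by
  refine (norm_sub_le _ _).trans (add_le_add ?_ ?_) <;>
  · rw [norm_smul]
    exact mul_le_of_le_one_left (norm_nonneg _)
      (by simp [Real.abs_cos_le_one, Real.abs_sin_le_one])

lemma clMul_kernelMinus_root {p : ℕ} {i : Cl n} (hi : isRoot p i) (x w : Fin n → ℝ) :
    clMul p (kernelMinus i x w) i = Real.sin (uu x w) • clOne n + Real.cos (uu x w) • i := by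
  rw [kernelMinus, sub_eq_add_neg, ← neg_smul, clMul_add_left, clMul_smul_left, clMul_smul_left,
    clMul_one_left, hi]
  module

lemma hasLineDerivAt_kernelMinus {p : ℕ} {i : Cl n} (hi : isRoot p i) (w a x : Fin n → ℝ) :
    HasLineDerivAt ℝ (fun x => kernelMinus i x w)
      (-uu a w • clMul p (kernelMinus i x w) i) x a := by
  have hu : HasDerivAt (fun t : ℝ => uu (x + t • a) w) (uu a w) 0 := by
    simp_rw [uu_add_smul]
    simpa using (hasDerivAt_mul_const (uu a w)).const_add (uu x w)
  have hcos := (Real.hasDerivAt_cos _).comp 0 hu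
  have hsin := (Real.hasDerivAt_sin _).comp 0 hu
  rw [HasLineDerivAt, clMul_kernelMinus_root hi x w]
  convert (hcos.smul_const (clOne n)).sub (hsin.smul_const i) using 1
  · rfl
  · simp only [zero_smul, add_zero]
    module

section Integration

variable {X : Type*} [MeasurableSpace X] {μ : Measure X} (p : ℕ)

lemma integral_clMul_const {g : X → Cl n} (hg : Integrable g μ) (c : Cl n) :
    ∫ x, clMul p (g x) c ∂μ = clMul p (∫ x, g x ∂μ) c :=
  ((clMulCLM p).flip c).integral_comp_comm hg

lemma integrable_clMul_kernelMinus {f : (Fin n → ℝ) → Cl n} (hf : Integrable f) (i : Cl n)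
    (w : Fin n → ℝ) : Integrable fun x => clMul p (f x) (kernelMinus i x w) :=
  (clMulCLM p).integrable_of_bilin_of_bdd_right _ hf
    (continuous_kernelMinus i w).aestronglyMeasurable
    (ae_of_all _ fun x => norm_kernelMinus_le i x w)

end Integration

theorem cft_directional_deriv_general (p q : ℕ) (i : Cl (p + q)) (hi : isRoot p i)
    (f : (Fin (p + q) → ℝ) → Cl (p + q)) (hf : Differentiable ℝ f)
    (hint : Integrable f) (a : Fin (p + q) → ℝ)
    (hint' : Integrable (fun x => lineDeriv ℝ f x a))
    (w : Fin (p + q) → ℝ) :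
    cft p i (fun x => lineDeriv ℝ f x a) w =
      (∑ l, a l * w l) • clMul p (cft p i f w) i := by
  have hfK := integrable_clMul_kernelMinus p hint i w
  have hfK' : Integrable fun x =>
      clMul p (f x) (-uu a w • clMul p (kernelMinus i x w) i) := by
    simp_rw [clMul_smul_right, ← clMul_assoc]
    exact (((clMulCLM p).flip i).integrable_comp hfK).smul (-uu a w)
  have ibp := integral_bilinear_hasLineDerivAt_right_eq_neg_left_of_integrable
    (B := clMulCLM p) (integrable_clMul_kernelMinus p hint' i w) hfK' hfK
    (fun x _ => (hf x).lineDifferentiableAt.hasLineDerivAt)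
    (fun x _ => hasLineDerivAt_kernelMinus hi w a x)
  simp only [clMulCLM_apply, clMul_smul_right, ← clMul_assoc, integral_smul,
    integral_clMul_const p hfK] at ibp
  rw [cft, ← neg_neg (∫ x, _), ← ibp, cft, neg_smul, neg_neg, uu]

/-- Derivative rule: `𝓕^i{a·∇f}(w) = (a·w) 𝓕^i{f}(w) i`. -/
theorem cft_directional_deriv (p q : ℕ) (i : Cl (p + q)) (hi : isRoot p i)
    (hrev : clRev p i = -i)
    (f : (Fin (p + q) → ℝ) → Cl (p + q)) (hf : Differentiable ℝ f)
    (hint : Integrable f) (a : Fin (p + q) → ℝ)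
    (hint' : Integrable (fun x => lineDeriv ℝ f x a))
    (hdecay : Tendsto f (cocompact (Fin (p + q) → ℝ)) (nhds 0))
    (w : Fin (p + q) → ℝ) :
    cft p i (fun x => lineDeriv ℝ f x a) w =
      (∑ l, a l * w l) • clMul p (cft p i f w) i :=
  cft_directional_deriv_general p q i hi f hf hint a hint' w
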